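/- arXiv:2305.02995 — 3 statements merged into one kernel-verified Lean document; each statement's English description precedes it below -/
import Mathlib

section
/- Let (Ω, 𝒫) be a probability space and let Y, Z, G : Ω → {0,1} be measurable ({0,1}-valued) random variables such that G and Z are conditionally independent given Y (i.e., for all g, z, y ∈ {0,1}, 𝒫(G=g, Z=z | Y=y) = 𝒫(G=g | Y=y)·𝒫(Z=z | Y=y)). Assume 𝒫(Y=1), 𝒫(Y=0), 𝒫(Z=1), 𝒫(Z=0) are all strictly positive. Set π₁ = 𝒫(Z=1 | Y=1), π₀ = 𝒫(Z=1 | Y=0), TPR = 𝒫(G=1 | Y=1), TNR = 𝒫(G=0 | Y=0). Then the subpopulation accuracy gap satisfies |𝒫(Y=G | Z=1) − 𝒫(Y=G | Z=0)| = (𝒫(Y=1)·𝒫(Y=0) / (𝒫(Z=1)·𝒫(Z=0))) · |π₁ − π₀| · |TPR − TNR|. -/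
open MeasureTheory

/-- Conditional probability `𝒫(A | B)` as a real number. -/
noncomputable def condProb {Ω : Type*} [MeasurableSpace Ω] (μ : Measure Ω)
    (A B : Set Ω) : ℝ :=
  (μ (A ∩ B)).toReal / (μ B).toReal

lemma key_alg (qtt qff rtt rtf rft rff : ℝ)
    (hyt : rtt + rft ≠ 0) (hyf : rtf + rff ≠ 0)
    (hzt : rtt + rtf ≠ 0) (hzf : rft + rff ≠ 0) :
    (qtt*rtt/(rtt+rft) + qff*rtf/(rtf+rff))/(rtt+rtf)
      - (qtt*rft/(rtt+rft) + qff*rff/(rtf+rff))/(rft+rff)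
    = (rtt+rft)*(rtf+rff)/((rtt+rtf)*(rft+rff))
      * (rtt/(rtt+rft) - rtf/(rtf+rff))
      * (qtt/(rtt+rft) - qff/(rtf+rff)) := by
  field_simp
  ring

/-- **Theorem 1 (accuracy gap).** If the prediction `G` and the subpopulation
indicator `Z` are conditionally independent given the label `Y`, and all label
and subpopulation marginals are strictly positive, then the subpopulation
accuracy gap equals
`𝒫(Y=1)𝒫(Y=0)/(𝒫(Z=1)𝒫(Z=0)) · |π₁ − π₀| · |TPR − TNR|`. -/
theorem accuracy_gap {Ω : Type*} [MeasurableSpace Ω] (μ : Measure Ω)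
    [IsProbabilityMeasure μ] (Y Z G : Ω → Bool)
    (hY : Measurable Y) (hZ : Measurable Z) (hG : Measurable G)
    (hCI : ∀ g z y : Bool,
      condProb μ ({ω | G ω = g} ∩ {ω | Z ω = z}) {ω | Y ω = y} =
        condProb μ {ω | G ω = g} {ω | Y ω = y} *
          condProb μ {ω | Z ω = z} {ω | Y ω = y})
    (hY1 : 0 < μ {ω | Y ω = true}) (hY0 : 0 < μ {ω | Y ω = false})
    (hZ1 : 0 < μ {ω | Z ω = true}) (hZ0 : 0 < μ {ω | Z ω = false}) :
    |condProb μ {ω | Y ω = G ω} {ω | Z ω = true} -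
        condProb μ {ω | Y ω = G ω} {ω | Z ω = false}| =
      (μ {ω | Y ω = true}).toReal * (μ {ω | Y ω = false}).toReal /
          ((μ {ω | Z ω = true}).toReal * (μ {ω | Z ω = false}).toReal) *
        |condProb μ {ω | Z ω = true} {ω | Y ω = true} -
            condProb μ {ω | Z ω = true} {ω | Y ω = false}| *
        |condProb μ {ω | G ω = true} {ω | Y ω = true} -
            condProb μ {ω | G ω = false} {ω | Y ω = false}| := by
  -- measurability of Bool level sets
  have mY : ∀ b, MeasurableSet {ω | Y ω = b} := fun b => hY (measurableSet_singleton b)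
  have mZ : ∀ b, MeasurableSet {ω | Z ω = b} := fun b => hZ (measurableSet_singleton b)
  have mG : ∀ b, MeasurableSet {ω | G ω = b} := fun b => hG (measurableSet_singleton b)
  -- splitting over a boolean variable
  have hsplit : ∀ (W : Ω → Bool), Measurable W → ∀ (A : Set Ω),
      (μ A).toReal = (μ (A ∩ {ω | W ω = true})).toReal +
        (μ (A ∩ {ω | W ω = false})).toReal := by
    intro W hW A
    rw [← ENNReal.toReal_add (measure_ne_top _ _) (measure_ne_top _ _)]
    congr 1
    have hAF : A ∩ {ω | W ω = false} = A \ {ω | W ω = true} := by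
      ext ω
      simp [Set.mem_diff]
    rw [hAF]
    exact (measure_inter_add_diff A (hW (measurableSet_singleton true))).symm
  -- real-valued joint probabilities
  set r : Bool → Bool → ℝ :=
    fun z y => (μ ({ω | Z ω = z} ∩ {ω | Y ω = y})).toReal with hr
  set q : Bool → Bool → ℝ :=
    fun g y => (μ ({ω | G ω = g} ∩ {ω | Y ω = y})).toReal with hq
  have hytpos : (0:ℝ) < (μ {ω | Y ω = true}).toReal :=
    ENNReal.toReal_pos hY1.ne' (measure_ne_top _ _)
  have hyfpos : (0:ℝ) < (μ {ω | Y ω = false}).toReal :=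
    ENNReal.toReal_pos hY0.ne' (measure_ne_top _ _)
  have hztpos : (0:ℝ) < (μ {ω | Z ω = true}).toReal :=
    ENNReal.toReal_pos hZ1.ne' (measure_ne_top _ _)
  have hzfpos : (0:ℝ) < (μ {ω | Z ω = false}).toReal :=
    ENNReal.toReal_pos hZ0.ne' (measure_ne_top _ _)
  -- conditional independence in product form
  have hp : ∀ g z y : Bool,
      (μ (({ω | G ω = g} ∩ {ω | Z ω = z}) ∩ {ω | Y ω = y})).toReal =
        q g y * r z y / (μ {ω | Y ω = y}).toReal := by
    intro g z y
    have hyy : (0:ℝ) < (μ {ω | Y ω = y}).toReal := by cases y <;> assumption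
    have h := hCI g z y
    simp only [condProb, hr, hq] at h ⊢
    rw [div_mul_div_comm] at h
    rw [eq_div_iff hyy.ne']
    rw [div_eq_div_iff hyy.ne' (by positivity)] at h
    nlinarith [h]
  -- decomposition of the accuracy numerator
  have hnum : ∀ z : Bool,
      (μ ({ω | Y ω = G ω} ∩ {ω | Z ω = z})).toReal =
        q true true * r z true / (μ {ω | Y ω = true}).toReal +
        q false false * r z false / (μ {ω | Y ω = false}).toReal := by
    intro z
    rw [hsplit Y hY ({ω | Y ω = G ω} ∩ {ω | Z ω = z})]
    have e1 : ({ω | Y ω = G ω} ∩ {ω | Z ω = z}) ∩ {ω | Y ω = true} =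
        ({ω | G ω = true} ∩ {ω | Z ω = z}) ∩ {ω | Y ω = true} := by
      ext ω
      simp only [Set.mem_inter_iff, Set.mem_setOf_eq]
      cases hy : Y ω <;> cases hg : G ω <;> simp
    have e2 : ({ω | Y ω = G ω} ∩ {ω | Z ω = z}) ∩ {ω | Y ω = false} =
        ({ω | G ω = false} ∩ {ω | Z ω = z}) ∩ {ω | Y ω = false} := by
      ext ω
      simp only [Set.mem_inter_iff, Set.mem_setOf_eq]
      cases hy : Y ω <;> cases hg : G ω <;> simp
    rw [e1, e2, hp true z true, hp false z false]
  -- marginal decompositions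
  have hzmarg : ∀ z : Bool, (μ {ω | Z ω = z}).toReal = r z true + r z false :=
    fun z => hsplit Y hY {ω | Z ω = z}
  have hymargr : ∀ y : Bool, (μ {ω | Y ω = y}).toReal = r true y + r false y := by
    intro y
    rw [hsplit Z hZ {ω | Y ω = y}]
    simp only [hr, Set.inter_comm]
  have hymargq : ∀ y : Bool, (μ {ω | Y ω = y}).toReal = q true y + q false y := by
    intro y
    rw [hsplit G hG {ω | Y ω = y}]
    simp only [hq, Set.inter_comm]
  -- rewrite the goal
  simp only [condProb, hnum, hzmarg, hymargr]
  have hq1 : (μ ({ω | G ω = true} ∩ {ω | Y ω = true})).toReal = q true true := rfl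
  have hq0 : (μ ({ω | G ω = false} ∩ {ω | Y ω = false})).toReal = q false false := rfl
  have hr1 : (μ ({ω | Z ω = true} ∩ {ω | Y ω = true})).toReal = r true true := rfl
  have hr0 : (μ ({ω | Z ω = true} ∩ {ω | Y ω = false})).toReal = r true false := rfl
  rw [hq1, hq0, hr1, hr0]
  have hyt : (0:ℝ) < r true true + r false true := by rw [← hymargr true]; exact hytpos
  have hyf : (0:ℝ) < r true false + r false false := by rw [← hymargr false]; exact hyfpos
  have hzt : (0:ℝ) < r true true + r true false := by rw [← hzmarg true]; exact hztpos
  have hzf : (0:ℝ) < r false true + r false false := by rw [← hzmarg false]; exact hzfpos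
  rw [hymargr true, hymargr false] at *
  have key := key_alg (q true true) (q false false) (r true true) (r true false)
    (r false true) (r false false) hyt.ne' hyf.ne' hzt.ne' hzf.ne'
  have hc : (0:ℝ) ≤ (r true true + r false true) * (r true false + r false false) /
      ((r true true + r true false) * (r false true + r false false)) := by positivity
  rw [show
      (q true true * r true true / (r true true + r false true) +
        q false false * r true false / (r true false + r false false)) /
        (r true true + r true false) -
      (q true true * r false true / (r true true + r false true) +
        q false false * r false false / (r true false + r false false)) /
        (r false true + r false false) =
      (r true true + r false true) * (r true false + r false false) /
        ((r true true + r true false) * (r false true + r false false)) *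
      (r true true / (r true true + r false true) -
        r true false / (r true false + r false false)) *
      (q true true / (r true true + r false true) -
        q false false / (r true false + r false false)) from key]
  rw [abs_mul, abs_mul, abs_of_nonneg hc]
end

section
/- Let (Ω, 𝒫) be a probability space and let Y, Z, G : Ω → {0,1} be measurable random variables such that G and Z are conditionally independent given Y, and assume 𝒫(Y=0), 𝒫(Y=1), 𝒫(Z=0), 𝒫(Z=1) > 0. Set TPR = 𝒫(G=1 | Y=1) and TNR = 𝒫(G=0 | Y=0). Then |𝒫(Y=G | Z=1) − 𝒫(Y=G | Z=0)| = |𝒫(Y=1 | Z=1) − 𝒫(Y=1 | Z=0)| · |TPR − TNR|. -/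
open MeasureTheory

/-!
Splitting `{Y = G} ∩ {Z = z}` along the value of `Y` and using conditional independence,
`𝒫(Y=G | Z=z) = TNR + (TPR − TNR) · 𝒫(Y=1 | Z=z)`: the accuracy on a subpopulation is
affine in its base rate, with slope `TPR − TNR`. Subtracting the two subpopulations gives the
factorization.
-/

section

variable {Ω : Type*} [MeasurableSpace Ω] {μ : Measure Ω}

theorem condProb_eq_measureReal_div (A B : Set Ω) :
    condProb μ A B = μ.real (A ∩ B) / μ.real B := rfl

theorem measureReal_eq_add_inter_bool [IsFiniteMeasure μ] {Y : Ω → Bool} (hY : Measurable Y)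
    (s : Set Ω) :
    μ.real s = μ.real (s ∩ {ω | Y ω = true}) + μ.real (s ∩ {ω | Y ω = false}) := by
  have hfalse : {ω | Y ω = false} = {ω | Y ω = true}ᶜ := by ext; simp
  rw [hfalse, ← Set.sdiff_eq]
  exact (measureReal_inter_add_sdiff (hY (measurableSet_singleton true))).symm

theorem measureReal_inter_inter_eq_condProb_mul [IsFiniteMeasure μ] {A B C : Set Ω}
    (h : condProb μ (A ∩ B) C = condProb μ A C * condProb μ B C) :
    μ.real (A ∩ B ∩ C) = condProb μ A C * μ.real (B ∩ C) := by
  by_cases hC : μ.real C = 0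
  · have hABC : μ.real (A ∩ B ∩ C) = 0 :=
      le_antisymm (hC ▸ measureReal_mono Set.inter_subset_right) measureReal_nonneg
    have hBC : μ.real (B ∩ C) = 0 :=
      le_antisymm (hC ▸ measureReal_mono Set.inter_subset_right) measureReal_nonneg
    rw [hABC, hBC, mul_zero]
  · simp only [condProb_eq_measureReal_div] at h ⊢
    field_simp at h
    rw [div_mul_eq_mul_div, eq_div_iff hC, h]

theorem condProb_agree_eq_add_mul [IsFiniteMeasure μ] {Y G : Ω → Bool} (hY : Measurable Y)
    {S : Set Ω} (hS : μ.real S ≠ 0)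
    (hCI : ∀ g y : Bool, condProb μ ({ω | G ω = g} ∩ S) {ω | Y ω = y} =
      condProb μ {ω | G ω = g} {ω | Y ω = y} * condProb μ S {ω | Y ω = y}) :
    condProb μ {ω | Y ω = G ω} S =
      condProb μ {ω | G ω = false} {ω | Y ω = false} +
        (condProb μ {ω | G ω = true} {ω | Y ω = true} -
          condProb μ {ω | G ω = false} {ω | Y ω = false}) *
          condProb μ {ω | Y ω = true} S := by
  have hagree : ∀ y : Bool,
      {ω | Y ω = G ω} ∩ S ∩ {ω | Y ω = y} = {ω | G ω = y} ∩ S ∩ {ω | Y ω = y} := by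
    intro y
    ext ω
    simp only [Set.mem_inter_iff, Set.mem_ofPred_eq]
    grind
  have hnum : μ.real ({ω | Y ω = G ω} ∩ S) =
      condProb μ {ω | G ω = true} {ω | Y ω = true} * μ.real (S ∩ {ω | Y ω = true}) +
        condProb μ {ω | G ω = false} {ω | Y ω = false} * μ.real (S ∩ {ω | Y ω = false}) := by
    rw [measureReal_eq_add_inter_bool hY, hagree, hagree,
      measureReal_inter_inter_eq_condProb_mul (hCI true true),
      measureReal_inter_inter_eq_condProb_mul (hCI false false)]
  have hden := measureReal_eq_add_inter_bool (μ := μ) hY S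
  rw [condProb_eq_measureReal_div, condProb_eq_measureReal_div {ω | Y ω = true},
    Set.inter_comm {ω | Y ω = true}, hnum]
  field_simp
  linear_combination -condProb μ {ω | G ω = false} {ω | Y ω = false} * hden

end

theorem accuracy_gap_factorization_general {Ω : Type*} [MeasurableSpace Ω] (μ : Measure Ω)
    [IsProbabilityMeasure μ] (Y Z G : Ω → Bool)
    (hY : Measurable Y)
    (hCI : ∀ g z y : Bool,
      condProb μ ({ω | G ω = g} ∩ {ω | Z ω = z}) {ω | Y ω = y} =
        condProb μ {ω | G ω = g} {ω | Y ω = y} *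
          condProb μ {ω | Z ω = z} {ω | Y ω = y})
    (hZ1 : 0 < μ {ω | Z ω = true}) (hZ0 : 0 < μ {ω | Z ω = false}) :
    |condProb μ {ω | Y ω = G ω} {ω | Z ω = true} -
        condProb μ {ω | Y ω = G ω} {ω | Z ω = false}| =
      |condProb μ {ω | Y ω = true} {ω | Z ω = true} -
          condProb μ {ω | Y ω = true} {ω | Z ω = false}| *
        |condProb μ {ω | G ω = true} {ω | Y ω = true} -
            condProb μ {ω | G ω = false} {ω | Y ω = false}| := by
  rw [condProb_agree_eq_add_mul hY ((measureReal_ne_zero_iff).2 hZ1.ne') (hCI · true ·),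
    condProb_agree_eq_add_mul hY ((measureReal_ne_zero_iff).2 hZ0.ne') (hCI · false ·), ← abs_mul]
  ring_nf

/-- **Accuracy-gap factorization.** If the prediction `G` and the subpopulation
indicator `Z` are conditionally independent given the label `Y`, then
`|𝒫(Y=G | Z=1) − 𝒫(Y=G | Z=0)| = |𝒫(Y=1 | Z=1) − 𝒫(Y=1 | Z=0)| · |TPR − TNR|`. -/
theorem accuracy_gap_factorization {Ω : Type*} [MeasurableSpace Ω] (μ : Measure Ω)
    [IsProbabilityMeasure μ] (Y Z G : Ω → Bool)
    (hY : Measurable Y) (hZ : Measurable Z) (hG : Measurable G)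
    (hCI : ∀ g z y : Bool,
      condProb μ ({ω | G ω = g} ∩ {ω | Z ω = z}) {ω | Y ω = y} =
        condProb μ {ω | G ω = g} {ω | Y ω = y} *
          condProb μ {ω | Z ω = z} {ω | Y ω = y})
    (hY1 : 0 < μ {ω | Y ω = true}) (hY0 : 0 < μ {ω | Y ω = false})
    (hZ1 : 0 < μ {ω | Z ω = true}) (hZ0 : 0 < μ {ω | Z ω = false}) :
    |condProb μ {ω | Y ω = G ω} {ω | Z ω = true} -
        condProb μ {ω | Y ω = G ω} {ω | Z ω = false}| =
      |condProb μ {ω | Y ω = true} {ω | Z ω = true} -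
          condProb μ {ω | Y ω = true} {ω | Z ω = false}| *
        |condProb μ {ω | G ω = true} {ω | Y ω = true} -
            condProb μ {ω | G ω = false} {ω | Y ω = false}| :=
  accuracy_gap_factorization_general μ Y Z G hY hCI hZ1 hZ0
end

section
/- Let (Ω, 𝒫) and (Ω', 𝒫') be probability spaces carrying binary random variables (Y, Z, G) and (Y', Z', G') respectively, each satisfying the hypotheses of Theorem 1 (conditional independence of the prediction and subpopulation indicator given the label, and strictly positive marginals for labels and subpopulations). Suppose the two settings have equal label marginals 𝒫(Y=1) = 𝒫'(Y'=1), equal subpopulation marginals 𝒫(Z=1) = 𝒫'(Z'=1), equal true positive rates 𝒫(G=1 | Y=1) = 𝒫'(G'=1 | Y'=1), and equal true negative rates 𝒫(G=0 | Y=0) = 𝒫'(G'=0 | Y'=0). If the levels of spurious correlation satisfy |𝒫(Z=1|Y=1) − 𝒫(Z=1|Y=0)| ≤ |𝒫'(Z'=1|Y'=1) − 𝒫'(Z'=1|Y'=0)|, then the subpopulation accuracy gaps satisfy |𝒫(Y=G|Z=1) − 𝒫(Y=G|Z=0)| ≤ |𝒫'(Y'=G'|Z'=1) − 𝒫'(Y'=G'|Z'=0)|.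 -/
/-!
Because the prediction `G` and the subpopulation `Z` are conditionally independent given `Y`,
the accuracy on subpopulation `z` is the mixture `a P(Y=1|Z=z) + b P(Y=0|Z=z)` of the true
positive rate `a` and the true negative rate `b`. Writing `m z y = P(Z=z, Y=y)`, the difference
of two such mixtures is `(a - b) (m 1 1 m 0 0 - m 1 0 m 0 1) / (q (1 - q))` with `q = P(Z=1)`,
and the determinant of the joint table is `p (1 - p) (π₁ - π₀)` with `p = P(Y=1)`. So the accuracy
gap is `π₁ - π₀` times a factor depending only on `p`, `q`, `a` and `b`, which agree in the two
settings.
-/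

open MeasureTheory

lemma div_sub_div_eq_sub_mul_det {a b m₁₁ m₁₀ m₀₁ m₀₀ : ℝ} (h₁ : m₁₁ + m₁₀ ≠ 0)
    (h₀ : m₀₁ + m₀₀ ≠ 0) :
    (a * m₁₁ + b * m₁₀) / (m₁₁ + m₁₀) - (a * m₀₁ + b * m₀₀) / (m₀₁ + m₀₀) =
      (a - b) * (m₁₁ * m₀₀ - m₁₀ * m₀₁) / ((m₁₁ + m₁₀) * (m₀₁ + m₀₀)) := by
  rw [div_sub_div _ _ h₁ h₀]
  ring

lemma setOf_eq_false_eq_compl {Ω : Type*} (f : Ω → Bool) :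
    {ω | f ω = false} = {ω | f ω = true}ᶜ := by
  ext ω; simp

namespace ProbabilityTheory

variable {Ω : Type*} [MeasurableSpace Ω] {μ : Measure Ω}

def BoolCondIndep (μ : Measure Ω) (G Z Y : Ω → Bool) : Prop :=
  ∀ g z y : Bool,
    condProb μ ({ω | G ω = g} ∩ {ω | Z ω = z}) {ω | Y ω = y} =
      condProb μ {ω | G ω = g} {ω | Y ω = y} * condProb μ {ω | Z ω = z} {ω | Y ω = y}

lemma measureReal_inter_true_add_inter_false [IsFiniteMeasure μ] {f : Ω → Bool}
    (hf : Measurable f) (S : Set Ω) :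
    μ.real (S ∩ {ω | f ω = true}) + μ.real (S ∩ {ω | f ω = false}) = μ.real S := by
  rw [setOf_eq_false_eq_compl, ← Set.sdiff_eq]
  exact measureReal_inter_add_sdiff (hf (measurableSet_singleton true))

lemma probReal_eq_false [IsProbabilityMeasure μ] {f : Ω → Bool} (hf : Measurable f) :
    μ.real {ω | f ω = false} = 1 - μ.real {ω | f ω = true} := by
  rw [setOf_eq_false_eq_compl]
  exact probReal_compl_eq_one_sub (hf (measurableSet_singleton true))

lemma condProb_mul_measureReal [IsFiniteMeasure μ] (A B : Set Ω) :
    condProb μ A B * μ.real B = μ.real (A ∩ B) := by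
  rcases eq_or_ne (μ.real B) 0 with hB | hB
  · rw [hB, mul_zero, measureReal_mono_null Set.inter_subset_right hB]
  · exact div_mul_cancel₀ _ hB

lemma measureReal_inter_inter_of_condProb_inter [IsFiniteMeasure μ] {A C B : Set Ω}
    (h : condProb μ (A ∩ C) B = condProb μ A B * condProb μ C B) :
    μ.real (A ∩ C ∩ B) = condProb μ A B * μ.real (C ∩ B) := by
  rw [← condProb_mul_measureReal, h, mul_assoc, condProb_mul_measureReal]

variable {Y Z G : Ω → Bool}

lemma measureReal_setOf_eq_inter [IsFiniteMeasure μ] (hY : Measurable Y) (S : Set Ω) :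
    μ.real ({ω | Y ω = G ω} ∩ S) =
      μ.real ({ω | G ω = true} ∩ S ∩ {ω | Y ω = true}) +
        μ.real ({ω | G ω = false} ∩ S ∩ {ω | Y ω = false}) := by
  rw [← measureReal_inter_true_add_inter_false hY]
  congr 2 <;> ext ω <;> simp only [Set.mem_inter_iff, Set.mem_ofPred_eq] <;> grind

lemma measureReal_setOf_eq_inter_of_condIndep [IsFiniteMeasure μ] (hY : Measurable Y)
    (hCI : BoolCondIndep μ G Z Y) (z : Bool) :
    μ.real ({ω | Y ω = G ω} ∩ {ω | Z ω = z}) =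
      condProb μ {ω | G ω = true} {ω | Y ω = true} *
          μ.real ({ω | Z ω = z} ∩ {ω | Y ω = true}) +
        condProb μ {ω | G ω = false} {ω | Y ω = false} *
          μ.real ({ω | Z ω = z} ∩ {ω | Y ω = false}) := by
  rw [measureReal_setOf_eq_inter hY, measureReal_inter_inter_of_condProb_inter (hCI _ _ _),
    measureReal_inter_inter_of_condProb_inter (hCI _ _ _)]

lemma measureReal_inter_det_eq [IsProbabilityMeasure μ] (hY : Measurable Y)
    (hZ : Measurable Z) :
    μ.real ({ω | Z ω = true} ∩ {ω | Y ω = true}) *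
          μ.real ({ω | Z ω = false} ∩ {ω | Y ω = false}) -
        μ.real ({ω | Z ω = true} ∩ {ω | Y ω = false}) *
          μ.real ({ω | Z ω = false} ∩ {ω | Y ω = true}) =
      μ.real {ω | Y ω = true} * (1 - μ.real {ω | Y ω = true}) *
        (condProb μ {ω | Z ω = true} {ω | Y ω = true} -
          condProb μ {ω | Z ω = true} {ω | Y ω = false}) := by
  have hfalse : ∀ y, μ.real ({ω | Z ω = false} ∩ {ω | Y ω = y}) =
      (1 - condProb μ {ω | Z ω = true} {ω | Y ω = y}) * μ.real {ω | Y ω = y} := by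
    intro y
    rw [sub_mul, one_mul, condProb_mul_measureReal,
      ← measureReal_inter_true_add_inter_false hZ {ω | Y ω = y},
      Set.inter_comm {ω | Y ω = y}, Set.inter_comm {ω | Y ω = y}]
    ring
  rw [hfalse, hfalse, ← condProb_mul_measureReal {ω | Z ω = true},
    ← condProb_mul_measureReal {ω | Z ω = true}, probReal_eq_false hY]
  ring

theorem accuracy_gap_eq_mul_spurious_correlation [IsProbabilityMeasure μ] (hY : Measurable Y)
    (hZ : Measurable Z) (hCI : BoolCondIndep μ G Z Y) (hZ1 : μ {ω | Z ω = true} ≠ 0)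
    (hZ0 : μ {ω | Z ω = false} ≠ 0) :
    condProb μ {ω | Y ω = G ω} {ω | Z ω = true} -
        condProb μ {ω | Y ω = G ω} {ω | Z ω = false} =
      (condProb μ {ω | Z ω = true} {ω | Y ω = true} -
          condProb μ {ω | Z ω = true} {ω | Y ω = false}) *
        (μ.real {ω | Y ω = true} * (1 - μ.real {ω | Y ω = true}) *
            (condProb μ {ω | G ω = true} {ω | Y ω = true} -
              condProb μ {ω | G ω = false} {ω | Y ω = false}) /
          (μ.real {ω | Z ω = true} * (1 - μ.real {ω | Z ω = true}))) := by
  have hq₁ := (measureReal_inter_true_add_inter_false (μ := μ) hY {ω | Z ω = true}).symm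
  have hq₀ := (measureReal_inter_true_add_inter_false (μ := μ) hY {ω | Z ω = false}).symm
  have h₁ : μ.real {ω | Z ω = true} ≠ 0 := (measureReal_ne_zero_iff).2 hZ1
  have h₀ : μ.real {ω | Z ω = false} ≠ 0 := (measureReal_ne_zero_iff).2 hZ0
  rw [hq₁] at h₁
  rw [hq₀] at h₀
  change μ.real (_ ∩ _) / μ.real _ - μ.real (_ ∩ _) / μ.real _ = _
  rw [measureReal_setOf_eq_inter_of_condIndep hY hCI,
    measureReal_setOf_eq_inter_of_condIndep hY hCI, hq₁, hq₀,
    div_sub_div_eq_sub_mul_det h₁ h₀, measureReal_inter_det_eq hY hZ, ← hq₁, ← hq₀,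
    probReal_eq_false hZ]
  ring

end ProbabilityTheory

theorem accuracy_gap_monotone_general {Ω : Type*} [MeasurableSpace Ω]
    (μ : Measure Ω) [IsProbabilityMeasure μ] (Y Z G : Ω → Bool)
    {Ω' : Type*} [MeasurableSpace Ω']
    (μ' : Measure Ω') [IsProbabilityMeasure μ'] (Y' Z' G' : Ω' → Bool)
    (hY : Measurable Y) (hZ : Measurable Z)
    (hY' : Measurable Y') (hZ' : Measurable Z')
    (hCI : ∀ g z y : Bool,
      condProb μ ({ω | G ω = g} ∩ {ω | Z ω = z}) {ω | Y ω = y} =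
        condProb μ {ω | G ω = g} {ω | Y ω = y} *
          condProb μ {ω | Z ω = z} {ω | Y ω = y})
    (hCI' : ∀ g z y : Bool,
      condProb μ' ({ω | G' ω = g} ∩ {ω | Z' ω = z}) {ω | Y' ω = y} =
        condProb μ' {ω | G' ω = g} {ω | Y' ω = y} *
          condProb μ' {ω | Z' ω = z} {ω | Y' ω = y})
    (hZ1 : 0 < μ {ω | Z ω = true}) (hZ0 : 0 < μ {ω | Z ω = false})
    (hZ1' : 0 < μ' {ω | Z' ω = true}) (hZ0' : 0 < μ' {ω | Z' ω = false})
    (hYeq : μ {ω | Y ω = true} = μ' {ω | Y' ω = true})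
    (hZeq : μ {ω | Z ω = true} = μ' {ω | Z' ω = true})
    (hTPR : condProb μ {ω | G ω = true} {ω | Y ω = true} =
      condProb μ' {ω | G' ω = true} {ω | Y' ω = true})
    (hTNR : condProb μ {ω | G ω = false} {ω | Y ω = false} =
      condProb μ' {ω | G' ω = false} {ω | Y' ω = false})
    (hspu : |condProb μ {ω | Z ω = true} {ω | Y ω = true} -
        condProb μ {ω | Z ω = true} {ω | Y ω = false}| ≤
      |condProb μ' {ω | Z' ω = true} {ω | Y' ω = true} -
          condProb μ' {ω | Z' ω = true} {ω | Y' ω = false}|) :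
    |condProb μ {ω | Y ω = G ω} {ω | Z ω = true} -
        condProb μ {ω | Y ω = G ω} {ω | Z ω = false}| ≤
      |condProb μ' {ω | Y' ω = G' ω} {ω | Z' ω = true} -
          condProb μ' {ω | Y' ω = G' ω} {ω | Z' ω = false}| := by
  have hp : μ.real {ω | Y ω = true} = μ'.real {ω | Y' ω = true} := congrArg ENNReal.toReal hYeq
  have hq : μ.real {ω | Z ω = true} = μ'.real {ω | Z' ω = true} := congrArg ENNReal.toReal hZeq
  rw [ProbabilityTheory.accuracy_gap_eq_mul_spurious_correlation hY hZ hCI hZ1.ne' hZ0.ne',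
    ProbabilityTheory.accuracy_gap_eq_mul_spurious_correlation hY' hZ' hCI' hZ1'.ne' hZ0'.ne',
    hp, hq, hTPR, hTNR, abs_mul, abs_mul]
  exact mul_le_mul_of_nonneg_right hspu (abs_nonneg _)

/-- **Monotonicity of the accuracy gap in the level of spurious correlation.**
Two settings satisfying the hypotheses of Theorem 1, with equal label
marginals, equal subpopulation marginals, equal true positive rates and equal
true negative rates: if the first setting has a smaller (or equal) level of
spurious correlation `|π₁ − π₀|`, then its subpopulation accuracy gap is
smaller (or equal) as well. -/
theorem accuracy_gap_monotone {Ω : Type*} [MeasurableSpace Ω]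
    (μ : Measure Ω) [IsProbabilityMeasure μ] (Y Z G : Ω → Bool)
    {Ω' : Type*} [MeasurableSpace Ω']
    (μ' : Measure Ω') [IsProbabilityMeasure μ'] (Y' Z' G' : Ω' → Bool)
    (hY : Measurable Y) (hZ : Measurable Z) (hG : Measurable G)
    (hY' : Measurable Y') (hZ' : Measurable Z') (hG' : Measurable G')
    (hCI : ∀ g z y : Bool,
      condProb μ ({ω | G ω = g} ∩ {ω | Z ω = z}) {ω | Y ω = y} =
        condProb μ {ω | G ω = g} {ω | Y ω = y} *
          condProb μ {ω | Z ω = z} {ω | Y ω = y})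
    (hCI' : ∀ g z y : Bool,
      condProb μ' ({ω | G' ω = g} ∩ {ω | Z' ω = z}) {ω | Y' ω = y} =
        condProb μ' {ω | G' ω = g} {ω | Y' ω = y} *
          condProb μ' {ω | Z' ω = z} {ω | Y' ω = y})
    (hY1 : 0 < μ {ω | Y ω = true}) (hY0 : 0 < μ {ω | Y ω = false})
    (hZ1 : 0 < μ {ω | Z ω = true}) (hZ0 : 0 < μ {ω | Z ω = false})
    (hY1' : 0 < μ' {ω | Y' ω = true}) (hY0' : 0 < μ' {ω | Y' ω = false})
    (hZ1' : 0 < μ' {ω | Z' ω = true}) (hZ0' : 0 < μ' {ω | Z' ω = false})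
    (hYeq : μ {ω | Y ω = true} = μ' {ω | Y' ω = true})
    (hZeq : μ {ω | Z ω = true} = μ' {ω | Z' ω = true})
    (hTPR : condProb μ {ω | G ω = true} {ω | Y ω = true} =
      condProb μ' {ω | G' ω = true} {ω | Y' ω = true})
    (hTNR : condProb μ {ω | G ω = false} {ω | Y ω = false} =
      condProb μ' {ω | G' ω = false} {ω | Y' ω = false})
    (hspu : |condProb μ {ω | Z ω = true} {ω | Y ω = true} -
        condProb μ {ω | Z ω = true} {ω | Y ω = false}| ≤
      |condProb μ' {ω | Z' ω = true} {ω | Y' ω = true} -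
          condProb μ' {ω | Z' ω = true} {ω | Y' ω = false}|) :
    |condProb μ {ω | Y ω = G ω} {ω | Z ω = true} -
        condProb μ {ω | Y ω = G ω} {ω | Z ω = false}| ≤
      |condProb μ' {ω | Y' ω = G' ω} {ω | Z' ω = true} -
          condProb μ' {ω | Y' ω = G' ω} {ω | Z' ω = false}| :=
  accuracy_gap_monotone_general μ Y Z G μ' Y' Z' G' hY hZ hY' hZ' hCI hCI' hZ1 hZ0 hZ1' hZ0' hYeq
    hZeq hTPR hTNR hspu
end
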